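/- Suppose there exists a generalized quadrangle G of order (m, n) containing a subquadrangle G' of order (m, n/m) (so m divides n). Deleting the points and lines of G' from G leaves (m²−1)n points and (m²−1)n(n+1)/m lines; moreover (m+1)(n+1)·((m−1)n/m) = (m²−1)n(n+1)/m, and each remaining line contains exactly one deleted point, so the incidence graph of the remaining structure is an (m, n+1; 8)-bipartite biregular graph of order (m+n+1)(m²−1)n/m. -/

import Mathlib

/-!
A line outside the subquadrangle `G'` contains at most one point of `G'`, because two points of
`G'` are joined by a line of `G'`. Counting the flags formed by points of `G'` and lines outside
it gives `(m + 1)(n + 1)(n - n/m)`, which is the number of outside lines, so every outside line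
contains exactly one point of `G'`. Hence the residual structure has `m` points on each line and
`n + 1` lines through each point.

Like every generalized quadrangle it has no triangles, so its incidence graph has no cycles of
length 4 or 6. An 8-cycle exists by counting: a residual point `x` is collinear with
`(n + 1)(m - 1)` residual points `q`, and each `q` is collinear with at least `n(m - 1)`
residual points not collinear with `x`. This gives `(n + 1)n(m - 1)²` pairs `(q, y)`, more
than there are residual points, so some `y` comes from two different `q`.
-/
/-- A finite generalized quadrangle of order `(s,t)`. -/
structure GenQuad (P L : Type*) (s t : ℕ) where
  inc : P → L → Prop
  line_pts : ∀ ℓ : L, {p : P | inc p ℓ}.ncard = s + 1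
  pt_lines : ∀ p : P, {ℓ : L | inc p ℓ}.ncard = t + 1
  unique_line : ∀ ⦃p q : P⦄ ⦃ℓ ℓ' : L⦄, p ≠ q → inc p ℓ → inc q ℓ →
    inc p ℓ' → inc q ℓ' → ℓ = ℓ'
  gq : ∀ (p : P) (ℓ : L), ¬ inc p ℓ →
    ∃! q : P, inc q ℓ ∧ q ≠ p ∧ ∃ ℓ' : L, inc p ℓ' ∧ inc q ℓ'

/-- Two distinct points are collinear if some line is incident with both. -/
def GenQuad.coll {P L : Type*} {s t : ℕ} (G : GenQuad P L s t) (p q : P) : Prop :=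
  p ≠ q ∧ ∃ ℓ : L, G.inc p ℓ ∧ G.inc q ℓ

/-- The incidence graph of a point-line incidence relation `I`. -/
def incGraph {P L : Type*} (I : P → L → Prop) : SimpleGraph (P ⊕ L) where
  Adj x y :=
    match x, y with
    | Sum.inl p, Sum.inr l => I p l
    | Sum.inr l, Sum.inl p => I p l
    | _, _ => False
  symm := ⟨by rintro (p | l) (p' | l') h <;> exact h⟩
  loopless := ⟨by rintro (p | l) h <;> exact h⟩

open SimpleGraph Function

section IncidenceGraph

variable {P L : Type*} {I : P → L → Prop}

@[simp] lemma incGraph_adj_inl_inr {p : P} {ℓ : L} :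
    (incGraph I).Adj (.inl p) (.inr ℓ) ↔ I p ℓ := .rfl

@[simp] lemma incGraph_adj_inr_inl {p : P} {ℓ : L} :
    (incGraph I).Adj (.inr ℓ) (.inl p) ↔ I p ℓ := .rfl

@[simp] lemma incGraph_not_adj_inl_inl {p q : P} : ¬ (incGraph I).Adj (.inl p) (.inl q) := id

@[simp] lemma incGraph_not_adj_inr_inr {ℓ ℓ' : L} : ¬ (incGraph I).Adj (.inr ℓ) (.inr ℓ') := id

def incGraphColoring : (incGraph I).Coloring Bool :=
  Coloring.mk Sum.isLeft (by rintro (p | ℓ) (q | ℓ') h <;> simp_all)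

lemma incGraph_even_length {a : P ⊕ L} (w : (incGraph I).Walk a a) : Even w.length :=
  (incGraphColoring.even_length_iff_congr w).mpr .rfl

lemma incGraph_neighborSet_inl (p : P) :
    (incGraph I).neighborSet (.inl p) = .inr '' {ℓ | I p ℓ} := by
  ext (q | ℓ) <;> simp

lemma incGraph_neighborSet_inr (ℓ : L) :
    (incGraph I).neighborSet (.inr ℓ) = .inl '' {p | I p ℓ} := by
  ext (q | ℓ) <;> simp

lemma ncard_incGraph_neighborSet_inl (p : P) :
    ((incGraph I).neighborSet (.inl p)).ncard = {ℓ | I p ℓ}.ncard := by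
  rw [incGraph_neighborSet_inl, Set.ncard_image_of_injective _ Sum.inr_injective]

lemma ncard_incGraph_neighborSet_inr (ℓ : L) :
    ((incGraph I).neighborSet (.inr ℓ)).ncard = {p | I p ℓ}.ncard := by
  rw [incGraph_neighborSet_inr, Set.ncard_image_of_injective _ Sum.inl_injective]

end IncidenceGraph

open Classical in
noncomputable def collinearFinset {P L : Type*} [Fintype P] (I : P → L → Prop) (x : P) :
    Finset P :=
  {y | y ≠ x ∧ ∃ ℓ, I x ℓ ∧ I y ℓ}

/-- `inc_of_triangle`: three pairwise collinear points lie on a common line. -/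
structure IsTriangleFreePartialLinear {P L : Type*} (I : P → L → Prop) : Prop where
  eq_of_inc : ∀ ⦃p q : P⦄ ⦃ℓ ℓ' : L⦄, p ≠ q → I p ℓ → I q ℓ → I p ℓ' → I q ℓ' → ℓ = ℓ'
  inc_of_triangle : ∀ ⦃p q r : P⦄ ⦃ℓ ℓ' ℓ'' : L⦄, p ≠ q → q ≠ r → r ≠ p →
    I p ℓ → I q ℓ → I q ℓ' → I r ℓ' → I p ℓ'' → I r ℓ'' → I r ℓ

namespace IsTriangleFreePartialLinear

variable {P L : Type*} {I : P → L → Prop} (hI : IsTriangleFreePartialLinear I)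
include hI

lemma comap {P' L' : Type*} {f : P' → P} {g : L' → L} (hf : Injective f) (hg : Injective g) :
    IsTriangleFreePartialLinear (fun p ℓ => I (f p) (g ℓ)) where
  eq_of_inc _ _ _ _ hpq h₁ h₂ h₃ h₄ := hg (hI.eq_of_inc (hf.ne hpq) h₁ h₂ h₃ h₄)
  inc_of_triangle _ _ _ _ _ _ hpq hqr hrp := hI.inc_of_triangle (hf.ne hpq) (hf.ne hqr) (hf.ne hrp)

lemma length_ne_four {a : P ⊕ L} {w : (incGraph I).Walk a a} (hw : w.IsCycle) :
    w.length ≠ 4 := by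
  intro hlen
  obtain ⟨-, -, hnd⟩ := (Walk.isCycle_def _).mp hw
  match w, hlen with
  | .cons (v := b) h₁ (.cons (v := c) h₂ (.cons (v := d) h₃ (.cons h₄ .nil))), _ =>
    clear hw
    rcases a with p₀ | ℓ₀ <;> rcases b with p₁ | ℓ₁ <;> rcases c with p₂ | ℓ₂ <;>
      rcases d with p₃ | ℓ₃ <;>
      simp only [incGraph_adj_inl_inr, incGraph_adj_inr_inl, incGraph_not_adj_inl_inl,
        incGraph_not_adj_inr_inr] at h₁ h₂ h₃ h₄ <;>
      simp only [Walk.support_cons, Walk.support_nil, List.tail_cons, List.nodup_cons,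
        List.mem_cons, List.not_mem_nil, Sum.inl.injEq, Sum.inr.injEq, reduceCtorEq, false_or,
        or_false, List.nodup_nil, and_true, not_false_eq_true] at hnd
    · obtain ⟨hℓ, hp⟩ := hnd
      exact hℓ (hI.eq_of_inc (Ne.symm hp) h₁ h₂ h₄ h₃)
    · obtain ⟨hp, hℓ⟩ := hnd
      exact hℓ (hI.eq_of_inc hp h₂ h₃ h₁ h₄)

lemma length_ne_six {a : P ⊕ L} {w : (incGraph I).Walk a a} (hw : w.IsCycle) :
    w.length ≠ 6 := by
  intro hlen
  obtain ⟨-, -, hnd⟩ := (Walk.isCycle_def _).mp hw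
  match w, hlen with
  | .cons (v := b) h₁ (.cons (v := c) h₂ (.cons (v := d) h₃ (.cons (v := e) h₄
      (.cons (v := f) h₅ (.cons h₆ .nil))))), _ =>
    clear hw
    rcases a with p₀ | ℓ₀ <;> rcases b with p₁ | ℓ₁ <;> rcases c with p₂ | ℓ₂ <;>
      rcases d with p₃ | ℓ₃ <;> rcases e with p₄ | ℓ₄ <;> rcases f with p₅ | ℓ₅ <;>
      simp only [incGraph_adj_inl_inr, incGraph_adj_inr_inl, incGraph_not_adj_inl_inl,
        incGraph_not_adj_inr_inr] at h₁ h₂ h₃ h₄ h₅ h₆ <;>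
      simp only [Walk.support_cons, Walk.support_nil, List.tail_cons, List.nodup_cons,
        List.mem_cons, List.not_mem_nil, Sum.inl.injEq, Sum.inr.injEq, reduceCtorEq, false_or,
        or_false, List.nodup_nil, and_true, not_false_eq_true, not_or] at hnd
    · obtain ⟨⟨hℓ, -⟩, ⟨hp₂₄, hp₂₀⟩, -, hp₄₀⟩ := hnd
      have h : I p₄ ℓ₁ := hI.inc_of_triangle (Ne.symm hp₂₀) hp₂₄ hp₄₀ h₁ h₂ h₃ h₄ h₆ h₅
      exact hℓ (hI.eq_of_inc hp₂₄ h₂ h h₃ h₄)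
    · obtain ⟨⟨hp₁₃, hp₁₅⟩, ⟨-, hℓ⟩, hp₃₅, -⟩ := hnd
      have h : I p₅ ℓ₂ := hI.inc_of_triangle hp₁₃ hp₃₅ (Ne.symm hp₁₅) h₂ h₃ h₄ h₅ h₁ h₆
      exact hℓ (hI.eq_of_inc hp₁₅ h₂ h h₁ h₆)

theorem eight_le_egirth : 8 ≤ (incGraph I).egirth := by
  refine le_egirth.mpr fun a w hw => ?_
  have h3 := hw.three_le_length
  have h4 := hI.length_ne_four hw
  have h6 := hI.length_ne_six hw
  obtain ⟨j, hj⟩ := incGraph_even_length w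
  exact_mod_cast (by omega : 8 ≤ w.length)

lemma egirth_le_eight {x q y q' : P} {ℓ₁ ℓ₂ ℓ₃ ℓ₄ : L} (hxy : ∀ ℓ, I x ℓ → ¬ I y ℓ)
    (hqq' : q ≠ q') (h₁ : I x ℓ₁) (h₂ : I q ℓ₁) (h₃ : I q ℓ₂) (h₄ : I y ℓ₂) (h₅ : I y ℓ₃)
    (h₆ : I q' ℓ₃) (h₇ : I q' ℓ₄) (h₈ : I x ℓ₄) : (incGraph I).egirth ≤ 8 := by
  have hxq : x ≠ q := by rintro rfl; exact hxy ℓ₂ h₃ h₄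
  have hxq' : x ≠ q' := by rintro rfl; exact hxy ℓ₃ h₆ h₅
  have hyq : y ≠ q := by rintro rfl; exact hxy ℓ₁ h₁ h₂
  have hyq' : y ≠ q' := by rintro rfl; exact hxy ℓ₄ h₈ h₇
  have hxy' : x ≠ y := by rintro rfl; exact hxy ℓ₁ h₁ h₁
  have hℓ₁₂ : ℓ₁ ≠ ℓ₂ := by rintro rfl; exact hxy ℓ₁ h₁ h₄
  have hℓ₁₃ : ℓ₁ ≠ ℓ₃ := by rintro rfl; exact hxy ℓ₁ h₁ h₅
  have hℓ₂₄ : ℓ₂ ≠ ℓ₄ := by rintro rfl; exact hxy ℓ₂ h₈ h₄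
  have hℓ₃₄ : ℓ₃ ≠ ℓ₄ := by rintro rfl; exact hxy ℓ₃ h₈ h₅
  have hℓ₁₄ : ℓ₁ ≠ ℓ₄ := by
    rintro rfl
    exact hxy ℓ₁ h₁ (hI.inc_of_triangle hqq'.symm hyq.symm hyq' h₇ h₂ h₃ h₄ h₆ h₅)
  have hℓ₂₃ : ℓ₂ ≠ ℓ₃ := by
    rintro rfl
    exact hxy ℓ₂ (hI.inc_of_triangle hqq'.symm hxq.symm hxq' h₆ h₃ h₂ h₁ h₇ h₈) h₄
  let w : (incGraph I).Walk (.inl x) (.inl x) :=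
    .cons (incGraph_adj_inl_inr.2 h₁) <| .cons (incGraph_adj_inr_inl.2 h₂) <|
    .cons (incGraph_adj_inl_inr.2 h₃) <| .cons (incGraph_adj_inr_inl.2 h₄) <|
    .cons (incGraph_adj_inl_inr.2 h₅) <| .cons (incGraph_adj_inr_inl.2 h₆) <|
    .cons (incGraph_adj_inl_inr.2 h₇) <| .cons (incGraph_adj_inr_inl.2 h₈) .nil
  have hw : w.IsCycle := by
    simp [w, Walk.cons_isCycle_iff, Walk.isPath_def, hxq, hxq', hyq', hxy', hqq', hℓ₁₂, hℓ₁₃,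
      hℓ₁₄, hℓ₂₃, hℓ₂₄, hℓ₃₄, hxq.symm, hxq'.symm, hyq.symm, hxy'.symm]
  exact egirth_le_length hw

section Counting

variable [Fintype P] [Fintype L] {r k : ℕ} (hr : ∀ p, {ℓ | I p ℓ}.ncard = r)
  (hk : ∀ ℓ, {p | I p ℓ}.ncard = k)
include hr hk

lemma card_collinearFinset (x : P) : (collinearFinset I x).card = r * (k - 1) := by
  classical
  have hlines : ({ℓ | I x ℓ} : Finset L).card = r := by
    rw [← hr x, ← Set.ncard_coe_finset, Finset.coe_filter_univ]
  have hpts : ∀ ℓ, I x ℓ → (({p | I p ℓ} : Finset P).erase x).card = k - 1 := fun ℓ hℓ => by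
    rw [Finset.card_erase_of_mem (by simpa), ← hk ℓ, ← Set.ncard_coe_finset,
      Finset.coe_filter_univ]
  have hunion : collinearFinset I x =
      ({ℓ | I x ℓ} : Finset L).biUnion fun ℓ => ({p | I p ℓ} : Finset P).erase x := by
    ext y
    simp only [collinearFinset, Finset.mem_filter, Finset.mem_univ, true_and, Finset.mem_biUnion,
      Finset.mem_erase]
    tauto
  rw [hunion, Finset.card_biUnion, Finset.sum_congr rfl fun ℓ hℓ => hpts ℓ (by simpa using hℓ),
    Finset.sum_const, hlines, smul_eq_mul]
  intro ℓ hℓ ℓ' hℓ' hne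
  refine Finset.disjoint_left.mpr fun y hy hy' => hne ?_
  simp only [Finset.coe_filter, Finset.mem_univ, true_and, Set.mem_ofPred_eq,
    Finset.mem_erase, Finset.mem_filter] at hℓ hℓ' hy hy'
  exact hI.eq_of_inc hy.1 hy.2 hℓ hy'.2 hℓ'

lemma le_card_collinearFinset_sdiff [DecidableEq P] {x q : P} (hq : q ∈ collinearFinset I x) :
    (r - 1) * (k - 1) ≤ (collinearFinset I q \ insert x (collinearFinset I x)).card := by
  classical
  obtain ⟨hqx, ℓ, hxℓ, hqℓ⟩ : q ≠ x ∧ ∃ ℓ, I x ℓ ∧ I q ℓ := by simpa [collinearFinset] using hq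
  have hnear : collinearFinset I q ∩ insert x (collinearFinset I x) ⊆
      ({p | I p ℓ} : Finset P).erase q := by
    intro y hy
    simp only [collinearFinset, Finset.mem_inter, Finset.mem_insert, Finset.mem_filter,
      Finset.mem_univ, true_and, Finset.mem_erase] at hy ⊢
    obtain ⟨⟨hyq, ℓ', hqℓ', hyℓ'⟩, rfl | ⟨hyx, ℓ'', hxℓ'', hyℓ''⟩⟩ := hy
    · exact ⟨hyq, hxℓ⟩
    · exact ⟨hyq, hI.inc_of_triangle hqx.symm hyq.symm hyx hxℓ hqℓ hqℓ' hyℓ' hxℓ'' hyℓ''⟩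
  have hline : (({p | I p ℓ} : Finset P).erase q).card = k - 1 := by
    rw [Finset.card_erase_of_mem (by simpa), ← hk ℓ, ← Set.ncard_coe_finset,
      Finset.coe_filter_univ]
  have hsplit := Finset.card_sdiff_add_card_inter (collinearFinset I q)
    (insert x (collinearFinset I x))
  have := Finset.card_le_card hnear
  rw [card_collinearFinset hI hr hk] at hsplit
  rw [hline] at this
  rw [Nat.sub_one_mul]
  omega

end Counting

theorem egirth_le_eight_of_card_le [Finite P] [Finite L] [Nonempty P] {r k : ℕ}
    (hr : ∀ p, {ℓ | I p ℓ}.ncard = r) (hk : ∀ ℓ, {p | I p ℓ}.ncard = k)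
    (hcard : Nat.card P ≤ r * (r - 1) * (k - 1) ^ 2) : (incGraph I).egirth ≤ 8 := by
  classical
  cases nonempty_fintype P
  cases nonempty_fintype L
  obtain ⟨x⟩ := ‹Nonempty P›
  let pairs := (collinearFinset I x).sigma fun q =>
    collinearFinset I q \ insert x (collinearFinset I x)
  have hfar := Finset.card_nsmul_le_sum (collinearFinset I x)
    (fun q => (collinearFinset I q \ insert x (collinearFinset I x)).card) _
    fun q hq => le_card_collinearFinset_sdiff hI hr hk hq
  have hpairs : Nat.card P ≤ pairs.card := calc
    Nat.card P ≤ r * (k - 1) * ((r - 1) * (k - 1)) := by convert hcard using 1; ring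
    _ ≤ _ := by rwa [card_collinearFinset hI hr hk, smul_eq_mul] at hfar
    _ = pairs.card := (Finset.card_sigma _ _).symm
  obtain ⟨⟨q, y⟩, hqy, ⟨q', y'⟩, hqy', hne, rfl : y = y'⟩ :=
    Finset.exists_ne_map_eq_of_card_lt_of_maps_to (s := pairs) (t := Finset.univ.erase x)
      (f := fun z => z.2)
      (by
        rw [Finset.card_erase_of_mem (Finset.mem_univ x), Finset.card_univ,
          ← Nat.card_eq_fintype_card]
        have := Nat.card_pos (α := P)
        omega)
      (fun z hz => by simp_all [pairs])
  have hqq' : q ≠ q' := fun h => hne (by rw [h])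
  simp only [pairs, collinearFinset, Finset.mem_sigma, Finset.mem_sdiff, Finset.mem_insert,
    Finset.mem_filter, Finset.mem_univ, true_and, not_or, not_and, not_exists] at hqy hqy'
  obtain ⟨⟨-, ℓ₁, hxℓ₁, hqℓ₁⟩, ⟨-, ℓ₂, hqℓ₂, hyℓ₂⟩, hyx, hxy⟩ := hqy
  obtain ⟨⟨-, ℓ₄, hxℓ₄, hq'ℓ₄⟩, ⟨-, ℓ₃, hq'ℓ₃, hyℓ₃⟩, -⟩ := hqy'
  exact hI.egirth_le_eight (hxy hyx) hqq' hxℓ₁ hqℓ₁ hqℓ₂ hyℓ₂ hyℓ₃ hq'ℓ₃ hq'ℓ₄ hxℓ₄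

end IsTriangleFreePartialLinear

lemma Set.card_toFinset_filter {α : Type*} (S : Set α) [Fintype S] (f : α → Prop)
    [DecidablePred f] : (S.toFinset.filter f).card = {x ∈ S | f x}.ncard := by
  rw [← Set.ncard_coe_finset, Finset.coe_filter]
  simp only [Set.mem_toFinset]

theorem ncard_sep_eq_one_of_mul_eq {P L : Type*} [Finite P] [Finite L] {I : P → L → Prop}
    {A : Set P} {B : Set L} {d : ℕ} (hA : ∀ p ∈ A, {ℓ ∈ B | I p ℓ}.ncard = d)
    (hB : ∀ ℓ ∈ B, {p ∈ A | I p ℓ}.Subsingleton) (hcount : A.ncard * d = B.ncard) {ℓ : L}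
    (hℓ : ℓ ∈ B) : {p ∈ A | I p ℓ}.ncard = 1 := by
  classical
  cases nonempty_fintype P
  cases nonempty_fintype L
  have hsum := Finset.sum_card_bipartiteAbove_eq_sum_card_bipartiteBelow (s := A.toFinset)
    (t := B.toFinset) (r := I)
  simp only [Finset.bipartiteAbove, Finset.bipartiteBelow, Set.card_toFinset_filter] at hsum
  have hle : ∀ ℓ ∈ B.toFinset, {p ∈ A | I p ℓ}.ncard ≤ 1 := fun ℓ hℓ =>
    Set.ncard_le_one_iff_subsingleton.mpr (hB ℓ (Set.mem_toFinset.mp hℓ))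
  have heq : ∑ ℓ ∈ B.toFinset, {p ∈ A | I p ℓ}.ncard = ∑ ℓ ∈ B.toFinset, 1 := by
    rw [← hsum, Finset.sum_congr rfl fun p hp => hA p (Set.mem_toFinset.mp hp), Finset.sum_const,
      Finset.sum_const, smul_eq_mul, smul_eq_mul, mul_one, ← Set.ncard_eq_toFinset_card',
      ← Set.ncard_eq_toFinset_card', hcount]
  exact (Finset.sum_eq_sum_iff_of_le hle).mp heq ℓ (Set.mem_toFinset.mpr hℓ)

namespace GenQuad

variable {P L : Type*} {s t : ℕ}

theorem isTriangleFreePartialLinear (G : GenQuad P L s t) :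
    IsTriangleFreePartialLinear G.inc where
  eq_of_inc := G.unique_line
  inc_of_triangle p q r ℓ ℓ' ℓ'' hpq hqr hrp hpℓ hqℓ hqℓ' hrℓ' hpℓ'' hrℓ'' := by
    by_contra hrℓ
    have hpℓ' : ¬ G.inc p ℓ' := fun h => hrℓ (G.unique_line hpq hpℓ hqℓ h hqℓ' ▸ hrℓ')
    obtain ⟨z, -, hz⟩ := G.gq p ℓ' hpℓ'
    exact hqr ((hz q ⟨hqℓ', hpq.symm, ℓ, hpℓ, hqℓ⟩).trans
      (hz r ⟨hrℓ', hrp, ℓ'', hpℓ'', hrℓ''⟩).symm)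

variable {G : GenQuad P L s t} {P₀ : Set P} {L₀ : Set L}

section Subquadrangle

variable {s' t' : ℕ} {G' : GenQuad {p : P // p ∈ P₀} {ℓ : L // ℓ ∈ L₀} s' t'}

/-- Take a line `ℓ'` of `G'` through `q`. Unless `ℓ = ℓ'`, the point `r` of `ℓ'` that `G'`
makes collinear with `p` must be `q` by the axiom of `G`, so the line of `G'` joining `p` and `r`
is `ℓ`. -/
theorem mem_of_inc_of_inc (hG' : ∀ p ℓ, G'.inc p ℓ ↔ G.inc p.1 ℓ.1) {p q : P} (hp : p ∈ P₀)
    (hq : q ∈ P₀) (hpq : p ≠ q) {ℓ : L} (hpℓ : G.inc p ℓ) (hqℓ : G.inc q ℓ) : ℓ ∈ L₀ := by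
  obtain ⟨ℓ', hqℓ'⟩ : ∃ ℓ', G'.inc ⟨q, hq⟩ ℓ' :=
    Set.nonempty_of_ncard_ne_zero (s := {ℓ' | G'.inc ⟨q, hq⟩ ℓ'}) (by rw [G'.pt_lines]; omega)
  rw [hG'] at hqℓ'
  by_cases hpℓ' : G.inc p ℓ'.1
  · exact G.unique_line hpq hpℓ hqℓ hpℓ' hqℓ' ▸ ℓ'.2
  obtain ⟨r, ⟨hrℓ', hrp, μ, hpμ, hrμ⟩, -⟩ := G'.gq ⟨p, hp⟩ ℓ' (by rwa [hG'])
  rw [hG'] at hrℓ' hpμ hrμ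
  obtain ⟨z, -, hz⟩ := G.gq p ℓ'.1 hpℓ'
  have hqr : q = r := (hz q ⟨hqℓ', hpq.symm, ℓ, hpℓ, hqℓ⟩).trans
    (hz r ⟨hrℓ', fun h => hrp (Subtype.ext h), μ, hpμ, hrμ⟩).symm
  exact G.unique_line hpq hpℓ hqℓ hpμ (hqr ▸ hrμ) ▸ μ.2

theorem ncard_lines_compl (hG' : ∀ p ℓ, G'.inc p ℓ ↔ G.inc p.1 ℓ.1) {p : P} (hp : p ∈ P₀) :
    {ℓ ∈ L₀ᶜ | G.inc p ℓ}.ncard = t - t' := by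
  have hsub : {ℓ ∈ L₀ | G.inc p ℓ}.ncard = t' + 1 := by
    have hpre : {ℓ' | G'.inc ⟨p, hp⟩ ℓ'} = Subtype.val ⁻¹' {ℓ ∈ L₀ | G.inc p ℓ} := by
      ext ℓ'
      simp [hG']
    rw [← G'.pt_lines ⟨p, hp⟩, hpre, Set.ncard_preimage_of_injective_subset_range
      Subtype.val_injective fun ℓ hℓ => ⟨⟨ℓ, hℓ.1⟩, rfl⟩]
  have hsplit := Set.ncard_inter_add_ncard_sdiff_eq_ncard {ℓ | G.inc p ℓ} L₀
    (Set.finite_of_ncard_ne_zero (by rw [G.pt_lines]; omega))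
  rw [G.pt_lines, Set.ofPred_inter_eq_sep, Set.sdiff_eq, Set.ofPred_inter_eq_sep] at hsplit
  omega

theorem ncard_subquadrangle_points_on_eq_one [Finite P] [Finite L]
    (hG' : ∀ p ℓ, G'.inc p ℓ ↔ G.inc p.1 ℓ.1) (hcount : P₀.ncard * (t - t') = L₀ᶜ.ncard)
    {ℓ : L} (hℓ : ℓ ∉ L₀) : {p ∈ P₀ | G.inc p ℓ}.ncard = 1 :=
  ncard_sep_eq_one_of_mul_eq (fun _ hp => ncard_lines_compl hG' hp)
    (fun _ hℓ _ ⟨hp, hpℓ⟩ _ ⟨hq, hqℓ⟩ =>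
      by_contra fun hpq => hℓ (mem_of_inc_of_inc hG' hp hq hpq hpℓ hqℓ))
    hcount hℓ

end Subquadrangle

theorem ncard_residual_lines_through (hsub : ∀ ℓ ∈ L₀, ∀ p, G.inc p ℓ → p ∈ P₀)
    (p : {p : P // p ∉ P₀}) : {ℓ : {ℓ : L // ℓ ∉ L₀} | G.inc p.1 ℓ.1}.ncard = t + 1 := by
  rw [← G.pt_lines p.1]
  exact Set.ncard_preimage_of_injective_subset_range Subtype.val_injective
    fun ℓ hℓ => ⟨⟨ℓ, fun hℓ₀ => p.2 (hsub ℓ hℓ₀ p hℓ)⟩, rfl⟩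

theorem ncard_residual_points_on {ℓ : {ℓ : L // ℓ ∉ L₀}} (h : {p ∈ P₀ | G.inc p ℓ.1}.ncard = 1) :
    {p : {p : P // p ∉ P₀} | G.inc p.1 ℓ.1}.ncard = s := by
  have hpre : {p : {p : P // p ∉ P₀} | G.inc p.1 ℓ.1} =
      Subtype.val ⁻¹' {p ∈ P₀ᶜ | G.inc p ℓ.1} := by
    ext p
    simp [p.2]
  have hsplit := Set.ncard_inter_add_ncard_sdiff_eq_ncard {p | G.inc p ℓ.1} P₀
    (Set.finite_of_ncard_ne_zero (by rw [G.line_pts]; omega))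
  rw [G.line_pts, Set.ofPred_inter_eq_sep, Set.sdiff_eq, Set.ofPred_inter_eq_sep, h] at hsplit
  rw [hpre, Set.ncard_preimage_of_injective_subset_range Subtype.val_injective
    fun p hp => ⟨⟨p, hp.1⟩, rfl⟩]
  omega

theorem egirth_residual_eq_eight [Finite P] [Finite L]
    (hsub : ∀ ℓ ∈ L₀, ∀ p, G.inc p ℓ → p ∈ P₀)
    (hmeet : ∀ ℓ, ℓ ∉ L₀ → {p ∈ P₀ | G.inc p ℓ}.ncard = 1) [Nonempty {p : P // p ∉ P₀}]
    (hcard : Nat.card {p : P // p ∉ P₀} ≤ (t + 1) * t * (s - 1) ^ 2) :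
    (incGraph fun (p : {p : P // p ∉ P₀}) (ℓ : {ℓ : L // ℓ ∉ L₀}) => G.inc p.1 ℓ.1).egirth = 8 :=
  have hI := G.isTriangleFreePartialLinear.comap (P' := {p : P // p ∉ P₀})
    (L' := {ℓ : L // ℓ ∉ L₀}) Subtype.val_injective Subtype.val_injective
  le_antisymm (hI.egirth_le_eight_of_card_le (ncard_residual_lines_through hsub)
    (fun ℓ => ncard_residual_points_on (hmeet ℓ.1 ℓ.2)) (by rwa [Nat.add_sub_cancel]))
    hI.eight_le_egirth

end GenQuad

lemma sq_sub_one_mul_le {m n : ℕ} (hm : 2 ≤ m) (hmn : m ≤ n) :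
    (m ^ 2 - 1) * n ≤ (n + 1) * n * (m - 1) ^ 2 := by
  zify [Nat.one_le_pow 2 m (by omega), (by omega : 1 ≤ m)]
  have h : (0 : ℤ) ≤ (n + 1) * (m - 1) - (m + 1) := by nlinarith
  have hn : (0 : ℤ) ≤ n * (m - 1) := by nlinarith
  nlinarith [mul_nonneg hn h]

theorem stmt14_general {P L : Type*} (m n : ℕ) (hm : 2 ≤ m) (hmn : m ≤ n)
    (hdvd : m ∣ n)
    (G : GenQuad P L m n)
    (hP : Nat.card P = (m + 1) * (m * n + 1)) (hL : Nat.card L = (n + 1) * (m * n + 1))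
    (P₀ : Set P) (L₀ : Set L)
    (G' : GenQuad {p : P // p ∈ P₀} {ℓ : L // ℓ ∈ L₀} m (n / m))
    (hG' : ∀ (p : {p : P // p ∈ P₀}) (ℓ : {ℓ : L // ℓ ∈ L₀}), G'.inc p ℓ ↔ G.inc p.1 ℓ.1)
    (hP₀ : P₀.ncard = (m + 1) * (n + 1)) (hL₀ : L₀.ncard = (n / m + 1) * (n + 1))
    (hsub : ∀ ℓ ∈ L₀, ∀ p : P, G.inc p ℓ → p ∈ P₀) :
    {p : P | p ∉ P₀}.ncard = (m ^ 2 - 1) * n ∧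
    {ℓ : L | ℓ ∉ L₀}.ncard = (m ^ 2 - 1) * n * (n + 1) / m ∧
    (m + 1) * (n + 1) * ((m - 1) * n / m) = (m ^ 2 - 1) * n * (n + 1) / m ∧
    (∀ ℓ : L, ℓ ∉ L₀ → {p ∈ P₀ | G.inc p ℓ}.ncard = 1) ∧
    (let Γ := incGraph (fun (p : {p : P // p ∉ P₀}) (ℓ : {ℓ : L // ℓ ∉ L₀}) => G.inc p.1 ℓ.1)
     Γ.girth = 8 ∧
     (∀ p : {p : P // p ∉ P₀}, (Γ.neighborSet (Sum.inl p)).ncard = n + 1) ∧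
     (∀ ℓ : {ℓ : L // ℓ ∉ L₀}, (Γ.neighborSet (Sum.inr ℓ)).ncard = m) ∧
     Nat.card ({p : P // p ∉ P₀} ⊕ {ℓ : L // ℓ ∉ L₀}) = (m + n + 1) * (m ^ 2 - 1) * n / m) := by
  obtain ⟨k, rfl⟩ := hdvd
  have hm0 : 0 < m := by omega
  have hk : 0 < k := Nat.pos_of_ne_zero (by rintro rfl; omega)
  have hkm : m * k / m = k := Nat.mul_div_cancel_left k hm0
  have hm1 : 1 < m ^ 2 := Nat.one_lt_pow two_ne_zero (by omega)
  have : Finite P := Nat.finite_of_card_ne_zero (by rw [hP]; positivity)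
  have : Finite L := Nat.finite_of_card_ne_zero (by rw [hL]; positivity)
  have hPc : P₀ᶜ.ncard = (m ^ 2 - 1) * (m * k) :=
    Set.ncard_compl_of_ncard_eq_add P₀ (by rw [hP, hP₀]; zify [hm1.le]; ring)
  have hLc : L₀ᶜ.ncard = (m ^ 2 - 1) * k * (m * k + 1) :=
    Set.ncard_compl_of_ncard_eq_add L₀ (by rw [hL, hL₀, hkm]; zify [hm1.le]; ring)
  have hmeet (ℓ : L) (hℓ : ℓ ∉ L₀) : {p ∈ P₀ | G.inc p ℓ}.ncard = 1 :=
    GenQuad.ncard_subquadrangle_points_on_eq_one hG'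
      (by rw [hP₀, hkm, hLc]; zify [hm1.le, Nat.le_mul_of_pos_left k hm0]; ring) hℓ
  have hdiv : (m ^ 2 - 1) * (m * k) * (m * k + 1) / m = (m ^ 2 - 1) * k * (m * k + 1) :=
    Nat.div_eq_of_eq_mul_left hm0 (by ring)
  have hPc' : Nat.card {p : P // p ∉ P₀} = (m ^ 2 - 1) * (m * k) :=
    (Nat.card_coe_set_eq P₀ᶜ).trans hPc
  have hLc' : Nat.card {ℓ : L // ℓ ∉ L₀} = (m ^ 2 - 1) * k * (m * k + 1) :=
    (Nat.card_coe_set_eq L₀ᶜ).trans hLc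
  have : Nonempty {p : P // p ∉ P₀} := (Nat.card_pos_iff.mp <| by
    rw [hPc']; exact Nat.mul_pos (Nat.sub_pos_of_lt hm1) (by positivity)).1
  refine ⟨hPc, hLc.trans hdiv.symm, ?_, hmeet, ?_, fun p => ?_, fun ℓ => ?_, ?_⟩
  · rw [hdiv, Nat.div_eq_of_eq_mul_left hm0 (by ring : (m - 1) * (m * k) = (m - 1) * k * m)]
    zify [hm1.le, hm0]
    ring
  · rw [girth, GenQuad.egirth_residual_eq_eight hsub hmeet (hPc' ▸ sq_sub_one_mul_le hm hmn)]
    rfl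
  · rw [ncard_incGraph_neighborSet_inl, GenQuad.ncard_residual_lines_through hsub]
  · rw [ncard_incGraph_neighborSet_inr, GenQuad.ncard_residual_points_on (hmeet ℓ.1 ℓ.2)]
  · rw [Nat.card_sum, hPc', hLc',
      Nat.div_eq_of_eq_mul_left hm0 (by ring :
        (m + m * k + 1) * (m ^ 2 - 1) * (m * k) = (m + m * k + 1) * (m ^ 2 - 1) * k * m)]
    ring

/-- Suppose a generalized quadrangle `G` of order `(m,n)` contains a subquadrangle `G'` of
order `(m, n/m)` (so `m ∣ n`). Deleting the points and lines of `G'` leaves `(m²−1)n` points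
and `(m²−1)n(n+1)/m` lines; moreover `(m+1)(n+1)·((m−1)n/m) = (m²−1)n(n+1)/m`, each
remaining line contains exactly one deleted point, and the incidence graph of the remaining
structure is an `(m, n+1; 8)`-bipartite biregular graph of order `(m+n+1)(m²−1)n/m`. -/
theorem stmt14 {P L : Type*} [Finite P] [Finite L] (m n : ℕ) (hm : 2 ≤ m) (hmn : m ≤ n)
    (hdvd : m ∣ n)
    (G : GenQuad P L m n)
    (hP : Nat.card P = (m + 1) * (m * n + 1)) (hL : Nat.card L = (n + 1) * (m * n + 1))
    (P₀ : Set P) (L₀ : Set L)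
    (G' : GenQuad {p : P // p ∈ P₀} {ℓ : L // ℓ ∈ L₀} m (n / m))
    (hG' : ∀ (p : {p : P // p ∈ P₀}) (ℓ : {ℓ : L // ℓ ∈ L₀}), G'.inc p ℓ ↔ G.inc p.1 ℓ.1)
    (hP₀ : P₀.ncard = (m + 1) * (n + 1)) (hL₀ : L₀.ncard = (n / m + 1) * (n + 1))
    (hsub : ∀ ℓ ∈ L₀, ∀ p : P, G.inc p ℓ → p ∈ P₀) :
    {p : P | p ∉ P₀}.ncard = (m ^ 2 - 1) * n ∧
    {ℓ : L | ℓ ∉ L₀}.ncard = (m ^ 2 - 1) * n * (n + 1) / m ∧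
    (m + 1) * (n + 1) * ((m - 1) * n / m) = (m ^ 2 - 1) * n * (n + 1) / m ∧
    (∀ ℓ : L, ℓ ∉ L₀ → {p ∈ P₀ | G.inc p ℓ}.ncard = 1) ∧
    (let Γ := incGraph (fun (p : {p : P // p ∉ P₀}) (ℓ : {ℓ : L // ℓ ∉ L₀}) => G.inc p.1 ℓ.1)
     Γ.girth = 8 ∧
     (∀ p : {p : P // p ∉ P₀}, (Γ.neighborSet (Sum.inl p)).ncard = n + 1) ∧
     (∀ ℓ : {ℓ : L // ℓ ∉ L₀}, (Γ.neighborSet (Sum.inr ℓ)).ncard = m) ∧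
     Nat.card ({p : P // p ∉ P₀} ⊕ {ℓ : L // ℓ ∉ L₀}) = (m + n + 1) * (m ^ 2 - 1) * n / m) :=
  stmt14_general m n hm hmn hdvd G hP hL P₀ L₀ G' hG' hP₀ hL₀ hsub
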